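/- arXiv:2209.14863 — 2 statements merged into one kernel-verified Lean document; each statement's English description precedes it below -/
import Mathlib

section
/- Let σ_ι(z) = (1/ι)·log(1 + exp(ι z)) be the softplus approximation of ReLU with parameter ι > 0. If z ~ N(b, w²) with w > 0 and b ≠ 0, then for all sufficiently large ι, E[σ_ι''(z)·1_{z ≥ 0}] ≤ (1/|b|)·√(2/(eπ)). -/
/-!
On `[0, ∞)` the second derivative of the softplus is at most `ι e^{-ιz}`, and the density `p` of
`N(b, v)` grows at most like `p(0) e^{bz/v}`, because `-(z - b)² ≤ -b² + 2bz`. Once `ι ≥ 2b/v`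
the integrand is therefore dominated by `p(0) ι e^{-ιz/2}`, whose integral is `2 p(0)`. Finally
`|b| p(0) ≤ e^{-1/2} / √(2π)`, which is `x e^{-x²/2} ≤ e^{-1/2}` for `x = |b|/√v`.
-/

open MeasureTheory ProbabilityTheory Real Set
open scoped NNReal

lemma softplus_second_deriv_nonneg {ι : ℝ} (hι : 0 ≤ ι) (z : ℝ) :
    0 ≤ ι * exp (ι * z) / (1 + exp (ι * z)) ^ 2 := by
  positivity

lemma softplus_second_deriv_le {ι : ℝ} (hι : 0 ≤ ι) (z : ℝ) :
    ι * exp (ι * z) / (1 + exp (ι * z)) ^ 2 ≤ ι * exp (-ι * z) :=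
  calc ι * exp (ι * z) / (1 + exp (ι * z)) ^ 2 ≤ ι * exp (ι * z) / exp (ι * z) ^ 2 := by
        gcongr; linarith
    _ = ι * exp (-ι * z) := by rw [neg_mul, exp_neg]; field_simp

lemma gaussianPDFReal_le_gaussianPDFReal_zero_mul_exp (b : ℝ) (v : ℝ≥0) (z : ℝ) :
    gaussianPDFReal b v z ≤ gaussianPDFReal b v 0 * exp (b / v * z) := by
  simp only [gaussianPDFReal, mul_assoc, ← exp_add]
  gcongr
  have hsplit : -(z - b) ^ 2 / (2 * v) =
      -(0 - b) ^ 2 / (2 * v) + b / v * z - z ^ 2 / (2 * v) := by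
    ring
  have hsq : 0 ≤ z ^ 2 / (2 * (v : ℝ)) := by positivity
  linarith

lemma gaussianPDFReal_mul_exp_neg_mul_le {b ι : ℝ} {v : ℝ≥0} (hbι : b / v ≤ ι / 2) {z : ℝ}
    (hz : 0 ≤ z) :
    gaussianPDFReal b v z * exp (-ι * z) ≤ gaussianPDFReal b v 0 * exp (-(ι / 2) * z) :=
  calc gaussianPDFReal b v z * exp (-ι * z)
      ≤ gaussianPDFReal b v 0 * exp (b / v * z) * exp (-ι * z) :=
        mul_le_mul_of_nonneg_right
          (gaussianPDFReal_le_gaussianPDFReal_zero_mul_exp b v z) (exp_pos _).le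
    _ = gaussianPDFReal b v 0 * exp (b / v * z + -ι * z) := by rw [mul_assoc, exp_add]
    _ ≤ gaussianPDFReal b v 0 * exp (-(ι / 2) * z) := by
        gcongr
        · exact gaussianPDFReal_nonneg b v 0
        · nlinarith

lemma integral_Ici_exp_neg_mul {a : ℝ} (ha : 0 < a) : ∫ z in Ici 0, exp (-a * z) = a⁻¹ := by
  rw [integral_Ici_eq_integral_Ioi, integral_exp_mul_Ioi (neg_lt_zero.2 ha)]
  simp

lemma integrableOn_Ici_exp_neg_mul {a : ℝ} (ha : 0 < a) :
    IntegrableOn (fun z ↦ exp (-a * z)) (Ici 0) := by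
  rw [integrableOn_Ici_iff_integrableOn_Ioi]
  exact integrableOn_exp_mul_Ioi (neg_lt_zero.2 ha) 0

lemma setIntegral_gaussianReal_eq_setIntegral_mul {b : ℝ} {v : ℝ≥0} (hv : v ≠ 0) {s : Set ℝ}
    (hs : MeasurableSet s) (f : ℝ → ℝ) :
    ∫ z in s, f z ∂gaussianReal b v = ∫ z in s, gaussianPDFReal b v z * f z := by
  rw [← integral_indicator hs, ← integral_indicator hs,
    integral_gaussianReal_eq_integral_smul hv]
  simp only [smul_eq_mul, ← indicator_mul_right]

lemma setIntegral_Ici_gaussianReal_le_two_mul_gaussianPDFReal_zero {b ι : ℝ} {v : ℝ≥0}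
    (hv : v ≠ 0) (hι : 0 < ι) (hbι : b / v ≤ ι / 2) {f : ℝ → ℝ} (hf₀ : ∀ z ≥ 0, 0 ≤ f z)
    (hf : ∀ z ≥ 0, f z ≤ ι * exp (-ι * z)) :
    ∫ z in Ici 0, f z ∂gaussianReal b v ≤ 2 * gaussianPDFReal b v 0 := by
  have hbound : ∀ z ≥ 0,
      gaussianPDFReal b v z * f z ≤ gaussianPDFReal b v 0 * ι * exp (-(ι / 2) * z) := fun z hz ↦
    calc gaussianPDFReal b v z * f z ≤ gaussianPDFReal b v z * (ι * exp (-ι * z)) :=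
          mul_le_mul_of_nonneg_left (hf z hz) (gaussianPDFReal_nonneg b v z)
      _ = ι * (gaussianPDFReal b v z * exp (-ι * z)) := by ring
      _ ≤ ι * (gaussianPDFReal b v 0 * exp (-(ι / 2) * z)) :=
          mul_le_mul_of_nonneg_left (gaussianPDFReal_mul_exp_neg_mul_le hbι hz) hι.le
      _ = gaussianPDFReal b v 0 * ι * exp (-(ι / 2) * z) := by ring
  rw [setIntegral_gaussianReal_eq_setIntegral_mul hv measurableSet_Ici]
  calc ∫ z in Ici 0, gaussianPDFReal b v z * f z
      ≤ ∫ z in Ici 0, gaussianPDFReal b v 0 * ι * exp (-(ι / 2) * z) := by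
        refine integral_mono_of_nonneg ?_
          ((integrableOn_Ici_exp_neg_mul (by positivity)).const_mul _) ?_
        · filter_upwards [ae_restrict_mem measurableSet_Ici] with z hz
          exact mul_nonneg (gaussianPDFReal_nonneg b v z) (hf₀ z hz)
        · filter_upwards [ae_restrict_mem measurableSet_Ici] with z hz
          exact hbound z hz
    _ = 2 * gaussianPDFReal b v 0 := by
        rw [integral_const_mul, integral_Ici_exp_neg_mul (by positivity)]
        field_simp

lemma mul_exp_neg_sq_div_two_le (x : ℝ) : x * exp (-(x ^ 2 / 2)) ≤ exp (-(1 / 2)) := by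
  have hx : x ≤ exp (x ^ 2 / 2 - 1 / 2) := by
    nlinarith [add_one_le_exp (x ^ 2 / 2 - 1 / 2), sq_nonneg (x - 1)]
  calc x * exp (-(x ^ 2 / 2)) ≤ exp (x ^ 2 / 2 - 1 / 2) * exp (-(x ^ 2 / 2)) := by gcongr
    _ = exp (-(1 / 2)) := by rw [← exp_add]; ring_nf

lemma abs_mul_gaussianPDFReal_zero_le (b : ℝ) (v : ℝ≥0) :
    |b| * gaussianPDFReal b v 0 ≤ exp (-(1 / 2)) / √(2 * π) := by
  rcases eq_or_ne v 0 with rfl | hv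
  · simp only [gaussianPDFReal_zero_var, Pi.zero_apply, mul_zero]
    positivity
  have hs : 0 < √(v : ℝ) := Real.sqrt_pos.2 (by positivity)
  have hpdf : |b| * gaussianPDFReal b v 0
      = (|b| / √v) * exp (-((|b| / √v) ^ 2 / 2)) / √(2 * π) := by
    rw [gaussianPDFReal, Real.sqrt_mul (by positivity), div_pow, sq_sqrt (by positivity), sq_abs]
    field_simp
    ring_nf
  rw [hpdf]
  gcongr
  exact mul_exp_neg_sq_div_two_le _

lemma sqrt_two_div_exp_one_mul_pi : √(2 / (exp 1 * π)) = 2 * exp (-(1 / 2)) / √(2 * π) := by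
  rw [eq_div_iff (by positivity), ← Real.sqrt_mul (by positivity),
    Real.sqrt_eq_iff_mul_self_eq_of_pos (by positivity)]
  field_simp
  rw [sq, ← exp_add, ← exp_add]
  norm_num

/-- For the softplus `σ_ι(z) = (1/ι) log(1+exp(ιz))`, whose second derivative is
`σ_ι''(z) = ι e^{ιz}/(1+e^{ιz})²`, if `z ~ N(b, w²)` with `w > 0` and `b ≠ 0`, then for
all sufficiently large `ι`, `E[σ_ι''(z) 1_{z ≥ 0}] ≤ (1/|b|) √(2/(eπ))`. -/
theorem softplus_second_deriv_gaussian_bound (b w : ℝ) (hb : b ≠ 0) (hw : 0 < w) :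
    ∃ ι₀ > 0, ∀ ι ≥ ι₀,
      ∫ z in Set.Ici (0 : ℝ),
          ι * Real.exp (ι * z) / (1 + Real.exp (ι * z)) ^ 2
          ∂(gaussianReal b (Real.toNNReal (w ^ 2)))
        ≤ (1 / |b|) * Real.sqrt (2 / (Real.exp 1 * Real.pi)) := by
  have hv : ((w ^ 2).toNNReal : ℝ) = w ^ 2 := Real.coe_toNNReal _ (sq_nonneg w)
  have hv₀ : (w ^ 2).toNNReal ≠ 0 := by simpa using hw.ne'
  refine ⟨2 * |b| / w ^ 2, by positivity, fun ι hι ↦ ?_⟩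
  have hι₀ : 0 < ι := lt_of_lt_of_le (by positivity) hι
  have hbι : b / ((w ^ 2).toNNReal : ℝ) ≤ ι / 2 := by
    rw [hv]
    calc b / w ^ 2 ≤ |b| / w ^ 2 := by gcongr; exact le_abs_self b
      _ = 2 * |b| / w ^ 2 / 2 := by ring
      _ ≤ ι / 2 := by gcongr
  calc _ ≤ 2 * gaussianPDFReal b (w ^ 2).toNNReal 0 :=
        setIntegral_Ici_gaussianReal_le_two_mul_gaussianPDFReal_zero hv₀ hι₀ hbι
          (fun z _ ↦ softplus_second_deriv_nonneg hι₀.le z)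
          (fun z _ ↦ softplus_second_deriv_le hι₀.le z)
    _ ≤ (1 / |b|) * √(2 / (exp 1 * π)) := by
        rw [sqrt_two_div_exp_one_mul_pi, one_div_mul_eq_div, le_div_iff₀ (abs_pos.2 hb)]
        convert mul_le_mul_of_nonneg_left (abs_mul_gaussianPDFReal_zero_le b (w ^ 2).toNNReal)
          zero_le_two using 1 <;> ring
end

section
/- With the decreasing step sizes η_t = (2(t+t*)+1)/(γ(t+t*+1)²), the weighted sum Σ_{i=0}^{t−1} η_i² Π_{j=i+1}^{t−1} (1 − γη_j) is at most C·η_t/γ for an absolute constant C. -/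
open Finset

/-!
Since `1 - γ η_j = (j + t*)² / (j + t* + 1)²`, the product telescopes to
`(i + t* + 1)² / (t + t*)²`, and `η_i (i + t* + 1) ≤ 2 / γ`. Hence every summand is at most
`4 / (γ (t + t*))²` and the sum is at most `4 t / (γ (t + t*))² ≤ 4 / (γ² (t + t*))`, which is
at most `8 η_t / γ` because `η_t ≥ 1 / (γ (t + t* + 1))`.
-/

theorem Finset.prod_Ico_div_succ₀ {G₀ : Type*} [CommGroupWithZero G₀] {f : ℕ → G₀}
    (hf : ∀ j, f j ≠ 0) {a b : ℕ} (hab : a ≤ b) :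
    ∏ j ∈ Ico a b, f j / f (j + 1) = f a / f b := by
  induction b, hab using Nat.le_induction with
  | base => rw [Ico_self, prod_empty, div_self (hf a)]
  | succ b hab ih => rw [prod_Ico_succ_top hab, ih, div_mul_div_cancel₀ (hf b)]

noncomputable def stepsize (γ c : ℝ) (s : ℕ) : ℝ :=
  (2 * (s + c) + 1) / (γ * (s + c + 1) ^ 2)

section Stepsize

variable {γ c : ℝ}

lemma stepsize_pos (hγ : 0 < γ) (hc : 0 ≤ c) (s : ℕ) : 0 < stepsize γ c s := by
  unfold stepsize
  positivity

lemma one_sub_mul_stepsize (hγ : γ ≠ 0) (hc : 0 ≤ c) (s : ℕ) :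
    1 - γ * stepsize γ c s = (s + c) ^ 2 / (s + c + 1) ^ 2 := by
  have : (s : ℝ) + c + 1 ≠ 0 := by positivity
  unfold stepsize
  field_simp
  ring

lemma prod_one_sub_mul_stepsize (hγ : γ ≠ 0) (hc : 0 < c) {i t : ℕ} (hit : i < t) :
    ∏ j ∈ Ico (i + 1) t, (1 - γ * stepsize γ c j) = (i + c + 1) ^ 2 / (t + c) ^ 2 := by
  rw [prod_congr rfl fun j _ => one_sub_mul_stepsize hγ hc.le j]
  convert prod_Ico_div_succ₀ (f := fun j : ℕ => ((j : ℝ) + c) ^ 2) (fun j => by positivity) hit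
    using 3 <;> push_cast <;> ring

lemma stepsize_mul_le (hγ : 0 < γ) (hc : 0 ≤ c) (s : ℕ) :
    stepsize γ c s * (s + c + 1) ≤ 2 / γ := by
  have : (0 : ℝ) < s + c + 1 := by positivity
  rw [stepsize, div_mul_eq_mul_div, div_le_div_iff₀ (by positivity) hγ]
  nlinarith

lemma one_div_le_stepsize (hγ : 0 < γ) (hc : 0 ≤ c) (s : ℕ) :
    1 / (γ * (s + c + 1)) ≤ stepsize γ c s := by
  have : (0 : ℝ) ≤ s + c := by positivity
  rw [stepsize, div_le_div_iff₀ (by positivity) (by positivity)]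
  nlinarith [mul_pos hγ (show (0 : ℝ) < s + c + 1 by positivity)]

lemma sum_sq_stepsize_mul_prod_le (hγ : 0 < γ) (hc : 0 < c) (t : ℕ) :
    ∑ i ∈ range t, stepsize γ c i ^ 2 * ∏ j ∈ Ico (i + 1) t, (1 - γ * stepsize γ c j)
      ≤ 8 * stepsize γ c t / γ := by
  rcases Nat.eq_zero_or_pos t with rfl | ht
  · simp only [range_zero, sum_empty]
    exact div_nonneg (mul_nonneg (by norm_num) (stepsize_pos hγ hc.le 0).le) hγ.le
  have hT : (1 : ℝ) ≤ t + c := by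
    have : (1 : ℝ) ≤ t := by exact_mod_cast ht
    linarith
  calc ∑ i ∈ range t, stepsize γ c i ^ 2 * ∏ j ∈ Ico (i + 1) t, (1 - γ * stepsize γ c j)
      = ∑ i ∈ range t, (stepsize γ c i * (i + c + 1)) ^ 2 / (t + c) ^ 2 :=
        sum_congr rfl fun i hi => by
          rw [prod_one_sub_mul_stepsize hγ.ne' hc (mem_range.1 hi)]
          ring
    _ ≤ ∑ _i ∈ range t, (2 / γ) ^ 2 / (t + c) ^ 2 := by
        gcongr with i
        · exact mul_nonneg (stepsize_pos hγ hc.le i).le (by positivity)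
        · exact stepsize_mul_le hγ hc.le i
    _ = t / (t + c) * ((2 / γ) ^ 2 / (t + c)) := by
        rw [sum_const, card_range, nsmul_eq_mul]
        field_simp
    _ ≤ 1 * ((2 / γ) ^ 2 / (t + c)) := by
        gcongr
        exact div_le_one_of_le₀ (by simp [hc.le]) (by positivity)
    _ ≤ 8 * (1 / (γ * (t + c + 1))) / γ := by
        rw [one_mul, div_le_div_iff₀ (by positivity) hγ]
        field_simp
        nlinarith
    _ ≤ 8 * stepsize γ c t / γ := by
        gcongr
        exact one_div_le_stepsize hγ hc.le t

end Stepsize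

/-- For the decreasing step sizes `η_t = (2(t+t*)+1)/(γ(t+t*+1)²)`, the weighted sum
`Σ_{i=0}^{t−1} η_i² Π_{j=i+1}^{t−1} (1 − γ η_j)` is at most `C η_t / γ` for an absolute
constant `C`. -/
theorem stepsize_weighted_sum_bound :
    ∃ C > 0, ∀ (γ : ℝ), 0 < γ → ∀ (tstar : ℕ), 1 ≤ tstar →
      ∀ (η : ℕ → ℝ),
        (∀ s : ℕ, η s = (2 * ((s : ℝ) + tstar) + 1) / (γ * ((s : ℝ) + tstar + 1) ^ 2)) →
        ∀ t : ℕ,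
          ∑ i ∈ Finset.range t, (η i) ^ 2 * ∏ j ∈ Finset.Ico (i + 1) t, (1 - γ * η j)
            ≤ C * η t / γ := by
  refine ⟨8, by norm_num, fun γ hγ tstar htstar η hη t => ?_⟩
  obtain rfl : η = stepsize γ tstar := funext hη
  exact sum_sq_stepsize_mul_prod_le hγ (Nat.cast_pos.2 htstar) t
end
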